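/- Let a > 0, β > 0 and 0 ≤ e < 1. The average over the mean anomaly of the fourth power of the orbital speed, v⁴ = β²(2/r − 1/a)², along a Kepler ellipse of semi-major axis a and eccentricity e equals (β²/a²)(4/√(1 − e²) − 3); explicitly, (1/(2π)) ∫₀^{2π} β²(2/(a(1 − e·cos E)) − 1/a)²(1 − e·cos E) dE = (β²/a²)(4/√(1 − e²) − 3). -/

import Mathlib

/-!
Writing `u = 1 - e cos E`, the averaged quantity is
`(β/a)² (2/u - 1)² u = (β/a)² (4/u - 3 - e cos E)`. The cosine averages to zero, and `1/u`
averages to `1/√(1 - e²)`: up to the factor `√(1 - e²)`, `1/u` is the derivative of the true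
anomaly with respect to the eccentric anomaly, and the true anomaly advances by `2π` over one
revolution.
-/

open Real

lemma one_sub_mul_cos_pos {e : ℝ} (he : |e| < 1) (x : ℝ) : 0 < 1 - e * cos x := by
  have hcos : |e * cos x| < 1 := by
    rw [abs_mul]
    nlinarith [abs_cos_le_one x, abs_nonneg (cos x), abs_nonneg e]
  linarith [le_abs_self (e * cos x)]

lemma continuous_inv_one_sub_mul_cos {e : ℝ} (he : |e| < 1) :
    Continuous fun x => (1 - e * cos x)⁻¹ :=
  (continuous_const.sub (continuous_const.mul continuous_cos)).inv₀
    fun x => (one_sub_mul_cos_pos he x).ne'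

lemma sqrt_one_sub_sq_pos {e : ℝ} (he : |e| < 1) : 0 < √(1 - e ^ 2) :=
  sqrt_pos.mpr (by nlinarith [sq_abs e, abs_nonneg e])

/-- The classical `E + 2 arctan (β sin E / (1 - β cos E))` with `β = e / (1 + √(1 - e²))`. -/
noncomputable def trueAnomaly (e E : ℝ) : ℝ :=
  E + 2 * arctan (e * sin E / (1 + √(1 - e ^ 2) - e * cos E))

@[simp] lemma trueAnomaly_zero (e : ℝ) : trueAnomaly e 0 = 0 := by
  simp [trueAnomaly]

@[simp] lemma trueAnomaly_two_pi (e : ℝ) : trueAnomaly e (2 * π) = 2 * π := by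
  simp [trueAnomaly]

lemma hasDerivAt_trueAnomaly {e : ℝ} (he : |e| < 1) (E : ℝ) :
    HasDerivAt (trueAnomaly e) (√(1 - e ^ 2) / (1 - e * cos E)) E := by
  set b := √(1 - e ^ 2)
  have hb2 : b ^ 2 = 1 - e ^ 2 := sq_sqrt (by nlinarith [sq_abs e, abs_nonneg e])
  have hb : 0 < b := sqrt_one_sub_sq_pos he
  have hu := one_sub_mul_cos_pos he E
  have hD : 0 < 1 + b - e * cos E := by linarith
  have hN : HasDerivAt (fun x => e * sin x) (e * cos E) E := (hasDerivAt_sin E).const_mul e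
  have hD' : HasDerivAt (fun x => 1 + b - e * cos x) (e * sin E) E := by
    simpa using ((hasDerivAt_cos E).const_mul e).const_sub (1 + b)
  refine ((hasDerivAt_id E).add ((hN.div hD' hD.ne').arctan.const_mul 2)).congr_deriv ?_
  have hsum : (1 + b - e * cos E) ^ 2 + (e * sin E) ^ 2 = 2 * (1 + b) * (1 - e * cos E) := by
    linear_combination e ^ 2 * sin_sq_add_cos_sq E + hb2
  have hq : 1 + (e * sin E / (1 + b - e * cos E)) ^ 2
      = 2 * (1 + b) * (1 - e * cos E) / (1 + b - e * cos E) ^ 2 := by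
    rw [← hsum]; field_simp
  rw [Pi.div_apply, hq]
  field_simp
  linear_combination (-e ^ 2) * sin_sq_add_cos_sq E - hb2

lemma integral_inv_one_sub_mul_cos {e : ℝ} (he : |e| < 1) :
    ∫ x in (0:ℝ)..2 * π, (1 - e * cos x)⁻¹ = 2 * π / √(1 - e ^ 2) := by
  have hb := (sqrt_one_sub_sq_pos he).ne'
  have hderiv (x : ℝ) : HasDerivAt (fun E => trueAnomaly e E / √(1 - e ^ 2))
      (1 - e * cos x)⁻¹ x := by
    refine ((hasDerivAt_trueAnomaly he x).div_const _).congr_deriv ?_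
    field_simp
  rw [intervalIntegral.integral_eq_sub_of_hasDerivAt (fun x _ => hderiv x)
    ((continuous_inv_one_sub_mul_cos he).intervalIntegrable _ _)]
  simp

lemma two_div_mul_sub_one_div_sq_mul (a u : ℝ) (hu : u ≠ 0) :
    (2 / (a * u) - 1 / a) ^ 2 * u = (4 * u⁻¹ - 4 + u) / a ^ 2 := by
  field_simp
  ring

theorem kepler_mean_anomaly_average_v_fourth_general (a β e : ℝ)
    (he0 : 0 ≤ e) (he1 : e < 1) :
    (1 / (2 * π)) * ∫ E in (0:ℝ)..(2 * π),
        β ^ 2 * (2 / (a * (1 - e * Real.cos E)) - 1 / a) ^ 2 * (1 - e * Real.cos E) =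
      (β ^ 2 / a ^ 2) * (4 / Real.sqrt (1 - e ^ 2) - 3) := by
  have he : |e| < 1 := abs_lt.mpr ⟨by linarith, he1⟩
  calc (1 / (2 * π)) * ∫ E in (0:ℝ)..(2 * π),
        β ^ 2 * (2 / (a * (1 - e * cos E)) - 1 / a) ^ 2 * (1 - e * cos E)
      = (1 / (2 * π)) * ∫ E in (0:ℝ)..(2 * π),
          β ^ 2 / a ^ 2 * (4 * (1 - e * cos E)⁻¹ - (3 + e * cos E)) := by
        congr 1
        refine intervalIntegral.integral_congr fun E _ => ?_
        rw [mul_assoc, two_div_mul_sub_one_div_sq_mul _ _ (one_sub_mul_cos_pos he E).ne']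
        ring
    _ = (1 / (2 * π)) * (β ^ 2 / a ^ 2 * (4 * (2 * π / √(1 - e ^ 2)) - 2 * π * 3)) := by
        rw [intervalIntegral.integral_const_mul, intervalIntegral.integral_sub
          (((continuous_inv_one_sub_mul_cos he).intervalIntegrable _ _).const_mul _)
          (Continuous.intervalIntegrable (by fun_prop) _ _),
          intervalIntegral.integral_const_mul, integral_inv_one_sub_mul_cos he,
          intervalIntegral.integral_add intervalIntegrable_const
            (Continuous.intervalIntegrable (by fun_prop) _ _)]
        simp
    _ = (β ^ 2 / a ^ 2) * (4 / √(1 - e ^ 2) - 3) := by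
        field_simp

/-- Let `a > 0`, `β > 0` and `0 ≤ e < 1`. The average over the mean anomaly of the fourth power
of the orbital speed, `v⁴ = β²(2/r − 1/a)²`, along a Kepler ellipse of semi-major axis `a` and
eccentricity `e` equals `(β²/a²)(4/√(1 − e²) − 3)`:
`(1/(2π)) ∫₀^{2π} β²(2/(a(1 − e·cos E)) − 1/a)²(1 − e·cos E) dE = (β²/a²)(4/√(1 − e²) − 3)`. -/
theorem kepler_mean_anomaly_average_v_fourth (a β e : ℝ) (ha : 0 < a) (hβ : 0 < β)
    (he0 : 0 ≤ e) (he1 : e < 1) :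
    (1 / (2 * π)) * ∫ E in (0:ℝ)..(2 * π),
        β ^ 2 * (2 / (a * (1 - e * Real.cos E)) - 1 / a) ^ 2 * (1 - e * Real.cos E) =
      (β ^ 2 / a ^ 2) * (4 / Real.sqrt (1 - e ^ 2) - 3) :=
  kepler_mean_anomaly_average_v_fourth_general a β e he0 he1
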